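/- (Vanishing of UI characterizes the Blackwell order.) Let 𝒮, 𝒳₁, 𝒳₂ be finite sets and let P be a probability distribution on 𝒮 × 𝒳₁ × 𝒳₂ whose marginal on 𝒮 has full support. Let Δ_P denote the set of probability distributions Q on 𝒮 × 𝒳₁ × 𝒳₂ whose pair marginals on 𝒮 × 𝒳₁ and on 𝒮 × 𝒳₂ agree with those of P, and define UI(S;X₁∖X₂) := min over Q ∈ Δ_P of the conditional mutual information I_Q(S;X₁|X₂). Then UI(S;X₁∖X₂) = 0 if and only if the channel (X₁←S) with entries P(X₁=x₁|S=s) is a garbling of the channel (X₂←S) with entries P(X₂=x₂|S=s). -/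

import Mathlib

open Finset

/-- A probability distribution on a finite set. -/
def IsDist {S : Type} [Fintype S] (p : S → ℝ) : Prop :=
  (∀ s, 0 ≤ p s) ∧ ∑ s, p s = 1

/-- A channel from `S` to `X`: a column-stochastic matrix. -/
def IsChannel {S X : Type} [Fintype S] [Fintype X] (κ : X → S → ℝ) : Prop :=
  (∀ x s, 0 ≤ κ x s) ∧ ∀ s, ∑ x, κ x s = 1

/-- `κ₁` is a garbling of `κ₂` (the Blackwell order `κ₁ ⪯ κ₂`). -/
def IsGarbling {S X₁ X₂ : Type} [Fintype S] [Fintype X₁] [Fintype X₂]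
    (κ₁ : X₁ → S → ℝ) (κ₂ : X₂ → S → ℝ) : Prop :=
  ∃ lam : X₁ → X₂ → ℝ, IsChannel lam ∧ ∀ x₁ s, κ₁ x₁ s = ∑ x₂, lam x₁ x₂ * κ₂ x₂ s

/-- Optimal expected utility: maximum over decision rules `d : X → A`. -/
noncomputable def optUtility {S X A : Type} [Fintype S] [Fintype X] [Fintype A]
    (p : S → ℝ) (u : A × S → ℝ) (κ : X → S → ℝ) : ℝ :=
  ⨆ d : X → A, ∑ s, ∑ x, p s * κ x s * u (d x, s)

/-- Mutual information between input (with distribution `p`) and output of channel `κ`;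
terms with `κ x s = 0` are taken to be `0`. -/
noncomputable def mutualInfo {S X : Type} [Fintype S] [Fintype X]
    (p : S → ℝ) (κ : X → S → ℝ) : ℝ :=
  ∑ s, ∑ x, if κ x s = 0 then 0 else
    p s * κ x s * Real.log (κ x s / ∑ s', p s' * κ x s')

/-- Channel composition: `(κ·λ) x s = ∑ t, κ x t * λ t s`. -/
def chanComp {S T X : Type} [Fintype S] [Fintype T] [Fintype X]
    (κ : X → T → ℝ) (lam : T → S → ℝ) : X → S → ℝ :=
  fun x s => ∑ t, κ x t * lam t s

/-- Marginal on `S` of a joint distribution on `S × X₁ × X₂`. -/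
noncomputable def margS3 {S X₁ X₂ : Type} [Fintype S] [Fintype X₁] [Fintype X₂]
    (P : S × X₁ × X₂ → ℝ) (s : S) : ℝ := ∑ x₁, ∑ x₂, P (s, x₁, x₂)

/-- The channel `X₁ ← S` of conditional probabilities `P(X₁ = x₁ | S = s)`. -/
noncomputable def chan1of3 {S X₁ X₂ : Type} [Fintype S] [Fintype X₁] [Fintype X₂]
    (P : S × X₁ × X₂ → ℝ) (x₁ : X₁) (s : S) : ℝ :=
  (∑ x₂, P (s, x₁, x₂)) / margS3 P s

/-- The channel `X₂ ← S` of conditional probabilities `P(X₂ = x₂ | S = s)`. -/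
noncomputable def chan2of3 {S X₁ X₂ : Type} [Fintype S] [Fintype X₁] [Fintype X₂]
    (P : S × X₁ × X₂ → ℝ) (x₂ : X₂) (s : S) : ℝ :=
  (∑ x₁, P (s, x₁, x₂)) / margS3 P s

/-- Pushforward of a joint distribution on `S × X₁ × X₂` along `f : S → S'`. -/
noncomputable def push3 {S S' X₁ X₂ : Type} [Fintype S] [Fintype X₁] [Fintype X₂]
    [DecidableEq S'] (f : S → S') (P : S × X₁ × X₂ → ℝ) : S' × X₁ × X₂ → ℝ :=
  fun q => ∑ s ∈ Finset.univ.filter (fun s => f s = q.1), P (s, q.2.1, q.2.2)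

/-- Conditional mutual information `I_Q(S; X₁ | X₂)` of a joint distribution `Q` on
`S × X₁ × X₂`; terms with `Q(s,x₁,x₂) = 0` are taken to be `0`. -/
noncomputable def condMI {S X₁ X₂ : Type} [Fintype S] [Fintype X₁] [Fintype X₂]
    (Q : S × X₁ × X₂ → ℝ) : ℝ :=
  ∑ s, ∑ x₁, ∑ x₂,
    if Q (s, x₁, x₂) = 0 then 0 else
      Q (s, x₁, x₂) *
        Real.log (Q (s, x₁, x₂) * (∑ s', ∑ x₁', Q (s', x₁', x₂)) /
          ((∑ x₁', Q (s, x₁', x₂)) * (∑ s', Q (s', x₁, x₂))))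

/-- The optimization domain `Δ_P`: joint distributions `Q` on `S × X₁ × X₂` whose pair
marginals on `S × X₁` and on `S × X₂` agree with those of `P`. -/
def memDeltaP {S X₁ X₂ : Type} [Fintype S] [Fintype X₁] [Fintype X₂]
    (P Q : S × X₁ × X₂ → ℝ) : Prop :=
  (∀ q, 0 ≤ Q q) ∧ (∑ q, Q q = 1) ∧
  (∀ s x₁, ∑ x₂, Q (s, x₁, x₂) = ∑ x₂, P (s, x₁, x₂)) ∧
  (∀ s x₂, ∑ x₁, Q (s, x₁, x₂) = ∑ x₁, P (s, x₁, x₂))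

/-- The unique information `UI(S; X₁ ∖ X₂) = min_{Q ∈ Δ_P} I_Q(S; X₁ | X₂)`. -/
noncomputable def UI {S X₁ X₂ : Type} [Fintype S] [Fintype X₁] [Fintype X₂]
    (P : S × X₁ × X₂ → ℝ) : ℝ :=
  sInf (condMI '' {Q | memDeltaP P Q})


/-!
`I_Q(S; X₁ | X₂)` is the relative entropy of `Q` from `Q(s, x₂) Q(x₁, x₂) / Q(x₂)`, a
distribution of the same total mass, so it is nonnegative and vanishes exactly when
`S` and `X₁` are conditionally independent given `X₂` under `Q`, i.e. when
`Q(s, x₁, x₂) = λ(x₁ | x₂) Q(s, x₂)` for a channel `λ`. For `Q ∈ Δ_P`, summing this over `x₂`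
gives `P(x₁ | s) = ∑ λ(x₁ | x₂) P(x₂ | s)`; conversely a garbling `λ` gives
`λ(x₁ | x₂) P(s, x₂) ∈ Δ_P`. Finally, the infimum defining `UI` is attained: `Δ_P` is compact,
and on nonnegative `Q` the conditional mutual information is a signed sum of entropies,
hence continuous.
-/

open Real InformationTheory

lemma mul_log_div_eq_mul_klFun_div_add_sub {a b : ℝ} (h : b = 0 → a = 0) :
    a * log (a / b) = b * klFun (a / b) + a - b := by
  rcases eq_or_ne b 0 with rfl | hb
  · simp [h rfl]
  · rw [klFun]
    field_simp
    ring

lemma mul_klFun_div_eq_zero_iff {a b : ℝ} (ha : 0 ≤ a) (hb : 0 ≤ b) (h : b = 0 → a = 0) :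
    b * klFun (a / b) = 0 ↔ a = b := by
  rcases hb.eq_or_lt with rfl | hb
  · simp [h rfl]
  · rw [mul_eq_zero, klFun_eq_zero_iff (div_nonneg ha hb.le), div_eq_one_iff_eq hb.ne']
    simp [hb.ne']

section Marginals

variable {S X₁ X₂ : Type} [Fintype S] [Fintype X₁]

noncomputable def margX₂ (Q : S × X₁ × X₂ → ℝ) (x₂ : X₂) : ℝ := ∑ s, ∑ x₁, Q (s, x₁, x₂)

noncomputable def margSX₂ (Q : S × X₁ × X₂ → ℝ) (s : S) (x₂ : X₂) : ℝ := ∑ x₁, Q (s, x₁, x₂)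

noncomputable def margX₁X₂ (Q : S × X₁ × X₂ → ℝ) (x₁ : X₁) (x₂ : X₂) : ℝ := ∑ s, Q (s, x₁, x₂)

noncomputable def condIndepDist (Q : S × X₁ × X₂ → ℝ) : S × X₁ × X₂ → ℝ :=
  fun q => margSX₂ Q q.1 q.2.2 * margX₁X₂ Q q.2.1 q.2.2 / margX₂ Q q.2.2

lemma sum_triple [Fintype X₂] (f : S × X₁ × X₂ → ℝ) :
    ∑ q, f q = ∑ s, ∑ x₁, ∑ x₂, f (s, x₁, x₂) := by
  simp only [Fintype.sum_prod_type]

lemma sum_triple_right [Fintype X₂] (f : S × X₁ × X₂ → ℝ) :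
    ∑ q, f q = ∑ x₂, ∑ s, ∑ x₁, f (s, x₁, x₂) := by
  simp only [Fintype.sum_prod_type_right]
  exact sum_congr rfl fun _ _ => sum_comm

variable {Q : S × X₁ × X₂ → ℝ}

lemma sum_mul_margX₂ [Fintype X₂] (f : X₂ → ℝ) :
    ∑ q, Q q * f q.2.2 = ∑ x₂, margX₂ Q x₂ * f x₂ := by
  simp only [sum_triple_right, margX₂, sum_mul]

lemma sum_mul_margSX₂ [Fintype X₂] (f : S → X₂ → ℝ) :
    ∑ q, Q q * f q.1 q.2.2 = ∑ s, ∑ x₂, margSX₂ Q s x₂ * f s x₂ := by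
  simp only [sum_triple, margSX₂, sum_mul]
  exact sum_congr rfl fun _ _ => sum_comm

lemma sum_mul_margX₁X₂ [Fintype X₂] (f : X₁ → X₂ → ℝ) :
    ∑ q, Q q * f q.2.1 q.2.2 = ∑ x₁, ∑ x₂, margX₁X₂ Q x₁ x₂ * f x₁ x₂ := by
  simp only [sum_triple, margX₁X₂, sum_mul]
  rw [sum_comm]
  exact sum_congr rfl fun _ _ => sum_comm

lemma sum_condIndepDist [Fintype X₂] : ∑ q, condIndepDist Q q = ∑ q, Q q := by
  simp only [sum_triple_right, condIndepDist, ← sum_div, ← sum_mul,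
    ← mul_sum]
  refine sum_congr rfl fun x₂ _ => ?_
  have hA : ∑ s, margSX₂ Q s x₂ = margX₂ Q x₂ := rfl
  rw [show ∑ x₁, margX₁X₂ Q x₁ x₂ = margX₂ Q x₂ from sum_comm, hA, mul_self_div_self]
  rfl

lemma margSX₂_le_margX₂ (hQ : ∀ q, 0 ≤ Q q) (s : S) (x₂ : X₂) :
    margSX₂ Q s x₂ ≤ margX₂ Q x₂ :=
  single_le_sum (f := fun s => margSX₂ Q s x₂) (fun _ _ => sum_nonneg fun _ _ => hQ _)
    (mem_univ s)

lemma condIndepDist_nonneg (hQ : ∀ q, 0 ≤ Q q) (q : S × X₁ × X₂) : 0 ≤ condIndepDist Q q :=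
  div_nonneg (mul_nonneg (sum_nonneg fun _ _ => hQ _) (sum_nonneg fun _ _ => hQ _))
    (sum_nonneg fun _ _ => sum_nonneg fun _ _ => hQ _)

lemma eq_zero_of_condIndepDist_eq_zero (hQ : ∀ q, 0 ≤ Q q) {q : S × X₁ × X₂}
    (h : condIndepDist Q q = 0) : Q q = 0 := by
  obtain ⟨s, x₁, x₂⟩ := q
  refine le_antisymm ?_ (hQ _)
  have hB : Q (s, x₁, x₂) ≤ margSX₂ Q s x₂ :=
    single_le_sum (f := fun x₁ => Q (s, x₁, x₂)) (fun _ _ => hQ _) (mem_univ x₁)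
  have hC : Q (s, x₁, x₂) ≤ margX₁X₂ Q x₁ x₂ :=
    single_le_sum (f := fun s => Q (s, x₁, x₂)) (fun _ _ => hQ _) (mem_univ s)
  have hA := margSX₂_le_margX₂ hQ s x₂
  rcases div_eq_zero_iff.1 h with h | h
  · rcases mul_eq_zero.1 h with h | h <;> linarith
  · linarith

lemma eq_condIndepDist_of_factorization {lam : X₁ → X₂ → ℝ}
    {B : S → X₂ → ℝ} (hlam : ∀ x₂, ∑ x₁, lam x₁ x₂ = 1) (hB : ∀ s x₂, 0 ≤ B s x₂)
    (hQ : ∀ s x₁ x₂, Q (s, x₁, x₂) = lam x₁ x₂ * B s x₂) : Q = condIndepDist Q := by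
  funext ⟨s, x₁, x₂⟩
  have hSX₂ (s : S) : margSX₂ Q s x₂ = B s x₂ := by
    simp only [margSX₂, hQ, ← sum_mul, hlam, one_mul]
  have hX₂ : margX₂ Q x₂ = ∑ s, B s x₂ := sum_congr rfl fun s _ => hSX₂ s
  have hX₁X₂ : margX₁X₂ Q x₁ x₂ = lam x₁ x₂ * ∑ s, B s x₂ := by
    simp only [margX₁X₂, hQ, ← mul_sum]
  have hB0 : ∑ s, B s x₂ = 0 → B s x₂ = 0 := fun h =>
    (sum_eq_zero_iff_of_nonneg fun s _ => hB s x₂).1 h s (mem_univ s)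
  rw [condIndepDist, hSX₂, hX₂, hX₁X₂, hQ, mul_left_comm, mul_div_assoc,
    mul_div_cancel_of_imp hB0]

lemma condMI_eq_sum_mul_log_div [Fintype X₂] (Q : S × X₁ × X₂ → ℝ) :
    condMI Q = ∑ q, Q q * log (Q q / condIndepDist Q q) := by
  rw [condMI, sum_triple]
  refine sum_congr rfl fun s _ => sum_congr rfl fun x₁ _ => sum_congr rfl fun x₂ _ => ?_
  rw [condIndepDist, div_div_eq_mul_div]
  split_ifs with h
  · simp [h]
  · rfl

lemma condMI_eq_sum_mul_klFun [Fintype X₂] (hQ : ∀ q, 0 ≤ Q q) :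
    condMI Q = ∑ q, condIndepDist Q q * klFun (Q q / condIndepDist Q q) := by
  rw [condMI_eq_sum_mul_log_div, sum_congr rfl fun q _ => mul_log_div_eq_mul_klFun_div_add_sub
      (eq_zero_of_condIndepDist_eq_zero hQ (q := q)), sum_sub_distrib, sum_add_distrib,
    sum_condIndepDist, add_sub_cancel_right]

lemma condMI_nonneg [Fintype X₂] (hQ : ∀ q, 0 ≤ Q q) : 0 ≤ condMI Q := by
  rw [condMI_eq_sum_mul_klFun hQ]
  exact sum_nonneg fun q _ => mul_nonneg (condIndepDist_nonneg hQ q)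
    (klFun_nonneg (div_nonneg (hQ q) (condIndepDist_nonneg hQ q)))

lemma condMI_eq_zero_iff [Fintype X₂] (hQ : ∀ q, 0 ≤ Q q) :
    condMI Q = 0 ↔ Q = condIndepDist Q := by
  rw [condMI_eq_sum_mul_klFun hQ, sum_eq_zero_iff_of_nonneg fun q _ => mul_nonneg
      (condIndepDist_nonneg hQ q) (klFun_nonneg (div_nonneg (hQ q) (condIndepDist_nonneg hQ q))),
    funext_iff]
  simp only [mem_univ, true_imp_iff, mul_klFun_div_eq_zero_iff (hQ _)
    (condIndepDist_nonneg hQ _) (eq_zero_of_condIndepDist_eq_zero hQ)]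

lemma condMI_eq_sum_mul_log [Fintype X₂] (hQ : ∀ q, 0 ≤ Q q) :
    condMI Q = ∑ q, Q q * log (Q q) + ∑ x₂, margX₂ Q x₂ * log (margX₂ Q x₂)
      - ∑ s, ∑ x₂, margSX₂ Q s x₂ * log (margSX₂ Q s x₂)
      - ∑ x₁, ∑ x₂, margX₁X₂ Q x₁ x₂ * log (margX₁X₂ Q x₁ x₂) := by
  rw [← sum_mul_margX₂ fun x₂ => log (margX₂ Q x₂),
    ← sum_mul_margSX₂ fun s x₂ => log (margSX₂ Q s x₂),
    ← sum_mul_margX₁X₂ fun x₁ x₂ => log (margX₁X₂ Q x₁ x₂),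
    ← sum_add_distrib, ← sum_sub_distrib, ← sum_sub_distrib, condMI_eq_sum_mul_log_div]
  refine sum_congr rfl fun q _ => ?_
  rcases (hQ q).eq_or_lt with h | h
  · simp [← h]
  have hR : condIndepDist Q q ≠ 0 := fun h' => h.ne' (eq_zero_of_condIndepDist_eq_zero hQ h')
  obtain ⟨hBC, hA⟩ := div_ne_zero_iff.1 hR
  obtain ⟨hB, hC⟩ := mul_ne_zero_iff.1 hBC
  rw [log_div h.ne' hR, condIndepDist, log_div hBC hA, log_mul hB hC]
  ring

lemma continuousOn_condMI [Fintype X₂] :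
    ContinuousOn condMI {Q : S × X₁ × X₂ → ℝ | ∀ q, 0 ≤ Q q} := by
  refine ContinuousOn.congr (Continuous.continuousOn ?_) fun Q hQ => condMI_eq_sum_mul_log hQ
  unfold margX₂ margSX₂ margX₁X₂
  fun_prop

end Marginals

section DeltaP

variable {S X₁ X₂ : Type} [Fintype S] [Fintype X₁] [Fintype X₂]

lemma memDeltaP_self {P : S × X₁ × X₂ → ℝ} (hP : (∀ q, 0 ≤ P q) ∧ ∑ q, P q = 1) :
    memDeltaP P P :=
  ⟨hP.1, hP.2, fun _ _ => rfl, fun _ _ => rfl⟩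

lemma isCompact_setOf_memDeltaP (P : S × X₁ × X₂ → ℝ) : IsCompact {Q | memDeltaP P Q} := by
  have hsub : {Q | memDeltaP P Q} ⊆ Set.univ.pi fun _ => Set.Icc 0 1 := fun Q hQ q _ =>
    ⟨hQ.1 q, hQ.2.1 ▸ single_le_sum (fun q _ => hQ.1 q) (mem_univ q)⟩
  have hclosed : IsClosed {Q | memDeltaP P Q} := by
    simp only [memDeltaP, Set.ofPred_and, Set.ofPred_forall]
    refine .inter (isClosed_iInter fun q => isClosed_le continuous_const (continuous_apply q))
      (.inter (isClosed_eq (by fun_prop) continuous_const) (.inter ?_ ?_)) <;>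
    exact isClosed_iInter fun _ => isClosed_iInter fun _ => isClosed_eq (by fun_prop)
      continuous_const
  exact (isCompact_univ_pi fun _ => isCompact_Icc).of_isClosed_subset hclosed hsub

lemma exists_memDeltaP_condMI_eq_UI {P : S × X₁ × X₂ → ℝ}
    (hne : {Q | memDeltaP P Q}.Nonempty) :
    ∃ Q, memDeltaP P Q ∧ condMI Q = UI P :=
  ((isCompact_setOf_memDeltaP P).image_of_continuousOn
    (continuousOn_condMI.mono fun _ hQ => hQ.1)).sInf_mem (hne.image _)

lemma UI_eq_zero_iff_exists {P : S × X₁ × X₂ → ℝ} (hne : {Q | memDeltaP P Q}.Nonempty) :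
    UI P = 0 ↔ ∃ Q, memDeltaP P Q ∧ condMI Q = 0 := by
  have hnonneg : ∀ y ∈ condMI '' {Q | memDeltaP P Q}, 0 ≤ y := by
    rintro _ ⟨Q, hQ, rfl⟩
    exact condMI_nonneg hQ.1
  constructor
  · intro h
    obtain ⟨Q, hQ, hQUI⟩ := exists_memDeltaP_condMI_eq_UI hne
    exact ⟨Q, hQ, hQUI.trans h⟩
  · rintro ⟨Q, hQ, hQ0⟩
    exact le_antisymm (hQ0 ▸ csInf_le ⟨0, hnonneg⟩ ⟨Q, hQ, rfl⟩)
      (le_csInf (hne.image _) hnonneg)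

end DeltaP

section Garbling

variable {S X₁ X₂ : Type} [Fintype S] [Fintype X₁] [Fintype X₂]

lemma exists_isChannel_of_eq_condIndepDist [Nonempty X₁] {Q : S × X₁ × X₂ → ℝ}
    (hQ : ∀ q, 0 ≤ Q q) (h : Q = condIndepDist Q) :
    ∃ lam : X₁ → X₂ → ℝ, IsChannel lam ∧
      ∀ s x₁ x₂, Q (s, x₁, x₂) = lam x₁ x₂ * margSX₂ Q s x₂ := by
  refine ⟨fun x₁ x₂ => if margX₂ Q x₂ = 0 then (Fintype.card X₁ : ℝ)⁻¹
    else margX₁X₂ Q x₁ x₂ / margX₂ Q x₂, ⟨fun x₁ x₂ => ?_, fun x₂ => ?_⟩, fun s x₁ x₂ => ?_⟩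
  · dsimp only
    split_ifs
    · positivity
    · exact div_nonneg (sum_nonneg fun _ _ => hQ _)
        (sum_nonneg fun _ _ => sum_nonneg fun _ _ => hQ _)
  · dsimp only
    split_ifs with hA
    · simp
    · rw [← sum_div, show ∑ x₁, margX₁X₂ Q x₁ x₂ = margX₂ Q x₂ from sum_comm, div_self hA]
  · rw [congrFun h (s, x₁, x₂), condIndepDist]
    dsimp only
    split_ifs with hA
    · have hB : margSX₂ Q s x₂ = 0 := le_antisymm (hA ▸ margSX₂_le_margX₂ hQ s x₂)
        (sum_nonneg fun _ _ => hQ _)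
      simp [hA, hB]
    · ring

lemma isGarbling_of_factorization {P Q : S × X₁ × X₂ → ℝ} (hQ : memDeltaP P Q)
    {lam : X₁ → X₂ → ℝ} (hlam : IsChannel lam)
    (hfac : ∀ s x₁ x₂, Q (s, x₁, x₂) = lam x₁ x₂ * margSX₂ Q s x₂) :
    IsGarbling (chan1of3 P) (chan2of3 P) := by
  refine ⟨lam, hlam, fun x₁ s => ?_⟩
  calc chan1of3 P x₁ s = (∑ x₂, Q (s, x₁, x₂)) / margS3 P s := by rw [chan1of3, hQ.2.2.1]
    _ = ∑ x₂, lam x₁ x₂ * (margSX₂ Q s x₂ / margS3 P s) := by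
      simp only [hfac, sum_div, mul_div_assoc]
    _ = ∑ x₂, lam x₁ x₂ * chan2of3 P x₂ s := by simp only [margSX₂, hQ.2.2.2, chan2of3]

lemma eq_zero_of_margS3_eq_zero {P : S × X₁ × X₂ → ℝ} (hP : ∀ q, 0 ≤ P q) {s : S}
    (h : margS3 P s = 0) (x₁ : X₁) (x₂ : X₂) : P (s, x₁, x₂) = 0 := by
  rw [margS3, sum_eq_zero_iff_of_nonneg fun _ _ => sum_nonneg fun _ _ => hP _] at h
  exact (sum_eq_zero_iff_of_nonneg fun _ _ => hP _).1 (h x₁ (mem_univ _)) x₂ (mem_univ _)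

lemma memDeltaP_of_isGarbling {P : S × X₁ × X₂ → ℝ} (hP : (∀ q, 0 ≤ P q) ∧ ∑ q, P q = 1)
    {lam : X₁ → X₂ → ℝ} (hlam : IsChannel lam)
    (hgarb : ∀ x₁ s, chan1of3 P x₁ s = ∑ x₂, lam x₁ x₂ * chan2of3 P x₂ s) :
    memDeltaP P fun q => lam q.2.1 q.2.2 * margSX₂ P q.1 q.2.2 := by
  have hmarg (s : S) (x₁ : X₁) :
      ∑ x₂, lam x₁ x₂ * margSX₂ P s x₂ = ∑ x₂, P (s, x₁, x₂) := by
    have hzero := eq_zero_of_margS3_eq_zero hP.1 (s := s)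
    calc ∑ x₂, lam x₁ x₂ * margSX₂ P s x₂
        = margS3 P s * ∑ x₂, lam x₁ x₂ * chan2of3 P x₂ s := by
          simp only [mul_sum, chan2of3, mul_left_comm (margS3 P s)]
          refine sum_congr rfl fun x₂ _ => ?_
          rw [mul_div_cancel_of_imp' fun h => sum_eq_zero fun x₁ _ => hzero h x₁ x₂]
          rfl
      _ = ∑ x₂, P (s, x₁, x₂) := by
          rw [← hgarb, chan1of3,
            mul_div_cancel_of_imp' fun h => sum_eq_zero fun x₂ _ => hzero h x₁ x₂]
  refine ⟨fun q => mul_nonneg (hlam.1 _ _) (sum_nonneg fun _ _ => hP.1 _), ?_, hmarg,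
    fun s x₂ => by simp only [← sum_mul, hlam.2, one_mul, margSX₂]⟩
  rw [sum_triple, ← hP.2, sum_triple]
  exact sum_congr rfl fun s _ => sum_congr rfl fun x₁ _ => hmarg s x₁

end Garbling

theorem UI_eq_zero_iff_garbling {S X₁ X₂ : Type} [Fintype S] [Fintype X₁] [Fintype X₂]
    (P : S × X₁ × X₂ → ℝ)
    (hP : (∀ q, 0 ≤ P q) ∧ ∑ q, P q = 1) :
    UI P = 0 ↔ IsGarbling (chan1of3 P) (chan2of3 P) := by
  have : Nonempty X₁ := by
    by_contra h
    rw [not_nonempty_iff] at h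
    simp at hP
  rw [UI_eq_zero_iff_exists ⟨P, memDeltaP_self hP⟩]
  constructor
  · rintro ⟨Q, hQ, hQ0⟩
    obtain ⟨lam, hlam, hfac⟩ :=
      exists_isChannel_of_eq_condIndepDist hQ.1 ((condMI_eq_zero_iff hQ.1).1 hQ0)
    exact isGarbling_of_factorization hQ hlam hfac
  · rintro ⟨lam, hlam, hgarb⟩
    have hB (s : S) (x₂ : X₂) : 0 ≤ margSX₂ P s x₂ := sum_nonneg fun _ _ => hP.1 _
    refine ⟨_, memDeltaP_of_isGarbling hP hlam hgarb,
      (condMI_eq_zero_iff fun _ => mul_nonneg (hlam.1 _ _) (hB _ _)).2 ?_⟩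
    exact eq_condIndepDist_of_factorization hlam.2 hB fun _ _ _ => rfl
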